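/- arXiv:2412.17209 — 3 statements merged into one kernel-verified Lean document; each statement's English description precedes it below -/
import Mathlib

section
/- Let A be an n × n complex matrix and V an n × n unitary matrix. Then |Tr(A V)| ≤ √(rank A) · ‖A‖_F, where ‖A‖_F = √(∑_{i,j} |A_{ij}|²) is the Frobenius norm of A. -/
/-!
Let `P` be the orthogonal projection onto the column space of `A`, so that `P * A = A`. Then
`Tr (A V) = Tr (A (V P))`, and Cauchy–Schwarz for the Frobenius inner product bounds this by
`‖A‖_F ‖V P‖_F`. As `V` is an isometry and `P` a self-adjoint idempotent,
`‖V P‖_F ^ 2 = Tr (Pᴴ Vᴴ V P) = Tr P`, and the trace of a projection is the dimension of its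
range, here `rank A`.
-/

open Matrix WithLp

namespace Matrix

variable {m n : Type*} [Fintype m] [Fintype n]

lemma norm_trace_mul_le {R : Type*} [SeminormedRing R] (A : Matrix m n R) (B : Matrix n m R) :
    ‖(A * B).trace‖ ≤ √(∑ i, ∑ j, ‖A i j‖ ^ 2) * √(∑ i, ∑ j, ‖B i j‖ ^ 2) := by
  have hB : ∑ i, ∑ j, ‖B i j‖ ^ 2 = ∑ p : m × n, ‖B p.2 p.1‖ ^ 2 := by
    rw [Fintype.sum_prod_type, Finset.sum_comm]
  calc ‖(A * B).trace‖ = ‖∑ p : m × n, A p.1 p.2 * B p.2 p.1‖ := by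
        rw [Fintype.sum_prod_type]; rfl
    _ ≤ ∑ p : m × n, ‖A p.1 p.2‖ * ‖B p.2 p.1‖ :=
        (norm_sum_le _ _).trans (Finset.sum_le_sum fun _ _ => norm_mul_le _ _)
    _ ≤ √(∑ p : m × n, ‖A p.1 p.2‖ ^ 2) * √(∑ p : m × n, ‖B p.2 p.1‖ ^ 2) :=
        Real.sum_mul_le_sqrt_mul_sqrt _ _ _
    _ = √(∑ i, ∑ j, ‖A i j‖ ^ 2) * √(∑ i, ∑ j, ‖B i j‖ ^ 2) := by
        rw [Fintype.sum_prod_type, hB]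

variable {𝕜 : Type*} [RCLike 𝕜]

lemma ofReal_sum_sum_norm_sq (A : Matrix m n 𝕜) :
    ((∑ i, ∑ j, ‖A i j‖ ^ 2 : ℝ) : 𝕜) = (Aᴴ * A).trace := by
  rw [trace, Finset.sum_comm]
  push_cast
  refine Finset.sum_congr rfl fun j _ => Finset.sum_congr rfl fun i _ => ?_
  simp [RCLike.conj_mul]

variable [DecidableEq m] [DecidableEq n]

noncomputable def rangeProj (A : Matrix m n 𝕜) : Matrix m m 𝕜 :=
  (toEuclideanCLM (𝕜 := 𝕜) (n := m)).symm (LinearMap.range (toEuclideanLin A)).starProjection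

lemma isStarProjection_rangeProj (A : Matrix m n 𝕜) : IsStarProjection A.rangeProj :=
  isStarProjection_starProjection.map (toEuclideanCLM (𝕜 := 𝕜) (n := m)).symm

lemma rangeProj_mul_self (A : Matrix m n 𝕜) : A.rangeProj * A = A := by
  refine toLin'.injective <| LinearMap.ext fun v => ?_
  have h : toEuclideanCLM (𝕜 := 𝕜) A.rangeProj (toLp 2 (A *ᵥ v)) = toLp 2 (A *ᵥ v) := by
    rw [rangeProj, StarAlgEquiv.apply_symm_apply]
    exact Submodule.starProjection_eq_self_iff.mpr ⟨toLp 2 v, rfl⟩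
  simpa [toLin'_apply, ← mulVec_mulVec] using congrArg ofLp h

lemma trace_rangeProj (A : Matrix m n 𝕜) : A.rangeProj.trace = A.rank := by
  set K := LinearMap.range (toEuclideanLin A)
  have hK : LinearMap.IsProj K (K.starProjection : EuclideanSpace 𝕜 m →ₗ[𝕜] _) :=
    ⟨K.starProjection_apply_mem, fun _ => K.starProjection_eq_self_iff.mpr⟩
  rw [← trace_toLin_eq _ (EuclideanSpace.basisFun m 𝕜).toBasis,
    ← toEuclideanLin_eq_toLin_orthonormal, ← coe_toEuclideanCLM_eq_toEuclideanLin, rangeProj,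
    StarAlgEquiv.apply_symm_apply, hK.trace,
    rank_eq_finrank_range_toLin A (EuclideanSpace.basisFun m 𝕜).toBasis
      (EuclideanSpace.basisFun n 𝕜).toBasis]
  rfl

theorem norm_trace_mul_le_sqrt_rank_mul (A : Matrix m n 𝕜) (V : Matrix n m 𝕜)
    (hV : Vᴴ * V = 1) :
    ‖(A * V).trace‖ ≤ √A.rank * √(∑ i, ∑ j, ‖A i j‖ ^ 2) := by
  have hP := A.isStarProjection_rangeProj
  have hVP : ∑ i, ∑ j, ‖(V * A.rangeProj) i j‖ ^ 2 = A.rank := by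
    have h : ((V * A.rangeProj)ᴴ * (V * A.rangeProj)).trace = A.rank := by
      rw [conjTranspose_mul, Matrix.mul_assoc, ← Matrix.mul_assoc Vᴴ, hV, Matrix.one_mul,
        ← star_eq_conjTranspose, hP.isSelfAdjoint.star_eq, hP.isIdempotentElem.eq,
        trace_rangeProj]
    exact_mod_cast (ofReal_sum_sum_norm_sq _).trans h
  calc ‖(A * V).trace‖ = ‖(A * (V * A.rangeProj)).trace‖ := by
        conv_lhs => rw [← A.rangeProj_mul_self, trace_mul_cycle, trace_mul_comm]
    _ ≤ √(∑ i, ∑ j, ‖A i j‖ ^ 2) * √(∑ i, ∑ j, ‖(V * A.rangeProj) i j‖ ^ 2) :=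
        norm_trace_mul_le _ _
    _ = √A.rank * √(∑ i, ∑ j, ‖A i j‖ ^ 2) := by rw [hVP, mul_comm]

end Matrix

/-- For an `n × n` complex matrix `A` and a unitary `V`,
`|Tr(A V)| ≤ √(rank A) · ‖A‖_F`, where `‖A‖_F = √(∑ |A i j|²)`. -/
theorem trace_mul_unitary_le (n : ℕ) (A V : Matrix (Fin n) (Fin n) ℂ)
    (hV : Vᴴ * V = 1) :
    ‖(A * V).trace‖ ≤
      Real.sqrt (A.rank) * Real.sqrt (∑ i, ∑ j, ‖A i j‖ ^ 2) :=
  A.norm_trace_mul_le_sqrt_rank_mul V hV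
end

section
/- Let Q be a d × d complex matrix with Q · Q = I, let C = P₀ ⊗ₖ I_d + P₁ ⊗ₖ Q be the controlled-Q gate on ℂ² ⊗ ℂ^d (with P₀ = diag(1,0), P₁ = diag(0,1), and X the 2 × 2 Pauli X matrix), let α, β ∈ ℂ, and let φ : Fin d → ℂ be any vector. Writing e₀, e₁ for the standard basis of ℂ² and v ⊗ w for the vector (v ⊗ w)(i,j) = v(i)·w(j), one has C · ((α · (I₂ ⊗ₖ I_d) + β · (X ⊗ₖ Q)) · (e₀ ⊗ φ)) = (α·e₀ + β·e₁) ⊗ φ. -/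
open Matrix Kronecker

/-- The projector `|0⟩⟨0| = diag(1,0)`. -/
def P0 : Matrix (Fin 2) (Fin 2) ℂ := !![1, 0; 0, 0]

/-- The projector `|1⟩⟨1| = diag(0,1)`. -/
def P1 : Matrix (Fin 2) (Fin 2) ℂ := !![0, 0; 0, 1]

/-- The Pauli `X` matrix. -/
def pauliX : Matrix (Fin 2) (Fin 2) ℂ := !![0, 1; 1, 0]

/-- Standard basis vector `e₀` of `ℂ²`. -/
def e0 : Fin 2 → ℂ := ![1, 0]

/-- Standard basis vector `e₁` of `ℂ²`. -/
def e1 : Fin 2 → ℂ := ![0, 1]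

/-- Kronecker product of vectors: `(v ⊗ w)(i,j) = v(i)·w(j)`. -/
def kronVec {m n : Type*} (v : m → ℂ) (w : n → ℂ) : m × n → ℂ :=
  fun p => v p.1 * w p.2

/-- The controlled-`Q` disentangler turns the state produced by a twisted `T`-gate
`α I + β (X ⊗ Q)` acting on `e₀ ⊗ φ` into the product state `(α e₀ + β e₁) ⊗ φ`. -/
theorem controlled_disentangles (d : ℕ) (Q : Matrix (Fin d) (Fin d) ℂ)
    (hQ : Q * Q = 1) (α β : ℂ) (φ : Fin d → ℂ) :
    (P0 ⊗ₖ (1 : Matrix (Fin d) (Fin d) ℂ) + P1 ⊗ₖ Q).mulVec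
        ((α • ((1 : Matrix (Fin 2) (Fin 2) ℂ) ⊗ₖ (1 : Matrix (Fin d) (Fin d) ℂ))
            + β • (pauliX ⊗ₖ Q)).mulVec (kronVec e0 φ))
      = kronVec (α • e0 + β • e1) φ := by
  have hQ' : ∀ i j, ∑ k, Q i k * Q k j = if i = j then 1 else 0 := by
    intro i j
    have := congrFun (congrFun hQ i) j
    simpa [Matrix.mul_apply, Matrix.one_apply] using this
  funext p
  obtain ⟨i, j⟩ := p
  fin_cases i <;>
    simp [Matrix.mulVec, dotProduct, Fintype.sum_prod_type, Fin.sum_univ_two,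
      P0, P1, pauliX, e0, e1, kronVec, Matrix.one_apply, Finset.mul_sum,
      Finset.sum_add_distrib, mul_comm, mul_left_comm, mul_assoc]
  rw [Finset.sum_comm]
  have : ∀ x1, ∑ x, β * (Q j x * (Q x x1 * φ x1)) = β * ((if j = x1 then 1 else 0) * φ x1) := by
    intro x1
    rw [show ∑ x, β * (Q j x * (Q x x1 * φ x1)) = β * ((∑ x, Q j x * Q x x1) * φ x1) by
      rw [Finset.sum_mul, Finset.mul_sum]; exact Finset.sum_congr rfl fun x _ => by ring]
    rw [hQ']
  simp [this]
end

section
/- Let N : ℕ and let U₁, U₂ be unitary complex matrices indexed by (Fin N → ZMod 2). Suppose there exist functions g⁽¹⁾, a⁽¹⁾, g⁽²⁾, a⁽²⁾ : Fin N → ℕ and matrices D⁽¹⁾, F⁽¹⁾, B⁽¹⁾, C⁽¹⁾, D⁽²⁾, F⁽²⁾, B⁽²⁾, C⁽²⁾ : Matrix (Fin N) (Fin N) (ZMod 2) such that for every n : Fin N, U₁ᴴ · W(δₙ, 0) · U₁ = i^{g⁽¹⁾ₙ} · W(D⁽¹⁾ₙ, F⁽¹⁾ₙ), U₁ᴴ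 · W(0, δₙ) · U₁ = i^{a⁽¹⁾ₙ} · W(B⁽¹⁾ₙ, C⁽¹⁾ₙ), and similarly for U₂, where D⁽ⁱ⁾ₙ denotes the n-th row of D⁽ⁱ⁾ and δₙ the indicator vector of n. Then, setting U = U₂ · U₁, for every n : Fin N there exist s, s' : ℕ such that Uᴴ · W(δₙ, 0) · U = i^{s} · W((D⁽²⁾D⁽¹⁾ + F⁽²⁾B⁽¹⁾)ₙ, (D⁽²⁾F⁽¹⁾ + F⁽²⁾C⁽¹⁾)ₙ) and Uᴴ · W(0, δₙ) · U = i^{s'} · W((B⁽²⁾D⁽¹⁾ + C⁽²⁾B⁽¹⁾)ₙ, (B⁽²⁾F⁽¹⁾ + C⁽²⁾C⁽¹⁾)ₙ), where the matrix products and sums are taken over ZMod 2. -/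
/-!
Conjugation by a unitary `U` is multiplicative, and Pauli strings multiply like their labels
`(x, z) ∈ 𝔽₂ᴺ × 𝔽₂ᴺ` up to a sign. Hence the knowledge of `Uᴴ W(x, z) U` up to a power of `i` on the
generators `Xₙ`, `Zₙ` propagates additively: `U₁ᴴ W(x, z) U₁` is `W(x D + z B, x F + z C)` up to
such a phase, for every label. Conjugating by `U₂ U₁` is conjugating by `U₂` and then by `U₁`, so
the image of `Xₙ` (or `Zₙ`) is obtained by feeding the `n`-th row of the tableau of `U₂` into this
formula for `U₁`, which produces the `n`-th rows of the stated matrix products.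
-/

open Matrix

/-- Pauli-string (Weyl) operator `W(x,z) = ∏ₖ Xₖ^{xₖ} Zₖ^{zₖ}`:
the matrix with entries `W(x,z) a b = (−1)^{z·b}` if `a = b + x` and `0` otherwise.
`W(δₙ, 0)` is the Pauli `Xₙ` operator and `W(0, δₙ)` is the Pauli `Zₙ` operator. -/
def pauliW (N : ℕ) (x z : Fin N → ZMod 2) :
    Matrix (Fin N → ZMod 2) (Fin N → ZMod 2) ℂ :=
  fun a b => if a = b + x then (if (∑ k, z k * b k) = (0 : ZMod 2) then 1 else -1) else 0

noncomputable def pauliSign (c : ZMod 2) : ℂ := if c = 0 then 1 else -1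

lemma ZMod.two_eq_zero_or_one : ∀ c : ZMod 2, c = 0 ∨ c = 1 := by decide

lemma pauliSign_add (c d : ZMod 2) : pauliSign (c + d) = pauliSign c * pauliSign d := by
  rcases c.two_eq_zero_or_one with rfl | rfl <;> rcases d.two_eq_zero_or_one with rfl | rfl <;>
    simp [pauliSign, show (1 + 1 : ZMod 2) = 0 from rfl]

lemma pauliSign_eq_I_pow (c : ZMod 2) : ∃ t : ℕ, pauliSign c = Complex.I ^ t := by
  rcases c.two_eq_zero_or_one with rfl | rfl
  · exact ⟨0, by simp [pauliSign]⟩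
  · exact ⟨2, by simp [pauliSign]⟩

def PhaseEq {α : Type*} [SMul ℂ α] (a b : α) : Prop :=
  ∃ s : ℕ, a = Complex.I ^ s • b

namespace PhaseEq

section MulAction

variable {α : Type*} [MulAction ℂ α] {a b c : α}

lemma refl (a : α) : PhaseEq a a := ⟨0, by simp⟩

lemma of_eq (h : a = b) : PhaseEq a b := h ▸ refl a

lemma trans (hab : PhaseEq a b) (hbc : PhaseEq b c) : PhaseEq a c := by
  obtain ⟨s, rfl⟩ := hab
  obtain ⟨t, rfl⟩ := hbc
  exact ⟨t + s, by rw [smul_smul, ← pow_add, add_comm]⟩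

lemma I_pow_smul_left (t : ℕ) : PhaseEq (Complex.I ^ t • a) a := ⟨t, rfl⟩

/-- `i ^ t` has the inverse `i ^ (3 t)`, since `i ^ 4 = 1`. -/
lemma of_I_pow_smul_left {t : ℕ} (h : PhaseEq (Complex.I ^ t • a) b) : PhaseEq a b := by
  have hinv : Complex.I ^ (3 * t) * Complex.I ^ t = 1 := by
    rw [← pow_add, show 3 * t + t = 4 * t by ring, pow_mul, Complex.I_pow_four, one_pow]
  refine trans ⟨3 * t, ?_⟩ h
  rw [smul_smul, hinv, one_smul]

lemma of_pauliSign_smul_left {c : ZMod 2} (h : PhaseEq (pauliSign c • a) b) : PhaseEq a b := by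
  obtain ⟨t, ht⟩ := pauliSign_eq_I_pow c
  exact of_I_pow_smul_left (ht ▸ h)

lemma pauliSign_smul_left (c : ZMod 2) : PhaseEq (pauliSign c • a) a := by
  obtain ⟨t, ht⟩ := pauliSign_eq_I_pow c
  exact ht ▸ I_pow_smul_left t

end MulAction

variable {A : Type*} [Semiring A] [Algebra ℂ A] {a b a' b' : A}

lemma mul (h : PhaseEq a b) (h' : PhaseEq a' b') : PhaseEq (a * a') (b * b') := by
  obtain ⟨s, rfl⟩ := h
  obtain ⟨t, rfl⟩ := h'
  exact ⟨s + t, by rw [smul_mul_smul_comm, ← pow_add]⟩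

lemma mul_left (c : A) (h : PhaseEq a b) : PhaseEq (c * a) (c * b) := mul (refl c) h

lemma mul_right (c : A) (h : PhaseEq a b) : PhaseEq (a * c) (b * c) := mul h (refl c)

lemma conj_mul [StarMul A] {U₁ U₂ c : A} (h₂ : PhaseEq (star U₂ * a * U₂) b)
    (h₁ : PhaseEq (star U₁ * b * U₁) c) : PhaseEq (star (U₂ * U₁) * a * (U₂ * U₁)) c := by
  refine trans ?_ h₁
  rw [star_mul, show star U₁ * star U₂ * a * (U₂ * U₁) = star U₁ * (star U₂ * a * U₂) * U₁ by
    simp only [mul_assoc]]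
  exact (h₂.mul_left _).mul_right _

end PhaseEq

section Pauli

variable {N : ℕ}

lemma pauliW_apply (x z a b : Fin N → ZMod 2) :
    pauliW N x z a b = if a = b + x then pauliSign (z ⬝ᵥ b) else 0 := rfl

lemma pauliW_zero_zero : pauliW N 0 0 = 1 := by
  ext a b
  simp [pauliW_apply, Matrix.one_apply, pauliSign]

/-- Moving `Z^z` past `X^{x'}` costs the sign `(-1)^{z·x'}`. -/
lemma pauliW_mul (x z x' z' : Fin N → ZMod 2) :
    pauliW N x z * pauliW N x' z' = pauliSign (z ⬝ᵥ x') • pauliW N (x + x') (z + z') := by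
  ext a b
  rw [Matrix.mul_apply, Finset.sum_eq_single (b + x')]
  · simp only [pauliW_apply, Matrix.smul_apply, smul_eq_mul, if_true, add_assoc, add_comm x' x]
    split_ifs
    · rw [dotProduct_add, add_dotProduct, pauliSign_add, pauliSign_add]
      ring
    · simp
  · intro c _ hc
    rw [pauliW_apply x' z' c b, if_neg hc, mul_zero]
  · simp

lemma conj_mul_conj_of_mul_eq_one {M : Type*} [Monoid M] {u v : M} (h : u * v = 1) (a b : M) :
    v * a * u * (v * b * u) = v * (a * b) * u := by
  calc v * a * u * (v * b * u) = v * a * (u * v) * b * u := by simp only [mul_assoc]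
    _ = v * (a * b) * u := by rw [h, mul_one, mul_assoc v a b]

variable {U : Matrix (Fin N → ZMod 2) (Fin N → ZMod 2) ℂ}

lemma PhaseEq.conj_pauliW_add (hU : U * Uᴴ = 1) {x z x' z' y w y' w' : Fin N → ZMod 2}
    (h : PhaseEq (Uᴴ * pauliW N x z * U) (pauliW N y w))
    (h' : PhaseEq (Uᴴ * pauliW N x' z' * U) (pauliW N y' w')) :
    PhaseEq (Uᴴ * pauliW N (x + x') (z + z') * U) (pauliW N (y + y') (w + w')) := by
  have hprod := h.mul h'
  rw [conj_mul_conj_of_mul_eq_one hU, pauliW_mul, pauliW_mul, Matrix.mul_smul,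
    Matrix.smul_mul] at hprod
  exact PhaseEq.of_pauliSign_smul_left (hprod.trans (PhaseEq.pauliSign_smul_left _))

/-- Over `ZMod 2` every vector is a sum of generators `Pi.single n 1`. -/
lemma PhaseEq.conj_pauliW_of_single (hU : U * Uᴴ = 1)
    {x z y w : (Fin N → ZMod 2) →+ (Fin N → ZMod 2)}
    (h : ∀ n, PhaseEq (Uᴴ * pauliW N (x (Pi.single n 1)) (z (Pi.single n 1)) * U)
      (pauliW N (y (Pi.single n 1)) (w (Pi.single n 1))))
    (v : Fin N → ZMod 2) :
    PhaseEq (Uᴴ * pauliW N (x v) (z v) * U) (pauliW N (y v) (w v)) := by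
  have hzero : PhaseEq (Uᴴ * pauliW N 0 0 * U) (pauliW N 0 0) :=
    PhaseEq.of_eq (by rw [pauliW_zero_zero, Matrix.mul_one, mul_eq_one_comm.mp hU])
  induction v using Pi.single_induction with
  | zero => simpa using hzero
  | add v v' hv hv' => simpa only [map_add] using hv.conj_pauliW_add hU hv'
  | single n c =>
    rcases c.two_eq_zero_or_one with rfl | rfl
    · simpa using hzero
    · exact h n

theorem conj_pauliW_phaseEq_tableau {D F B C : Matrix (Fin N) (Fin N) (ZMod 2)} (hU : Uᴴ * U = 1)
    (hX : ∀ n, PhaseEq (Uᴴ * pauliW N (Pi.single n 1) 0 * U) (pauliW N (D n) (F n)))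
    (hZ : ∀ n, PhaseEq (Uᴴ * pauliW N 0 (Pi.single n 1) * U) (pauliW N (B n) (C n)))
    (x z : Fin N → ZMod 2) :
    PhaseEq (Uᴴ * pauliW N x z * U) (pauliW N (x ᵥ* D + z ᵥ* B) (x ᵥ* F + z ᵥ* C)) := by
  have hU' : U * Uᴴ = 1 := mul_eq_one_comm.mp hU
  have hx := PhaseEq.conj_pauliW_of_single hU' (x := AddMonoidHom.id _) (z := 0)
    (y := (vecMulLinear D).toAddMonoidHom) (w := (vecMulLinear F).toAddMonoidHom)
    (by simpa [Matrix.single_one_vecMul, Matrix.row_apply'] using hX) x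
  have hz := PhaseEq.conj_pauliW_of_single hU' (x := 0) (z := AddMonoidHom.id _)
    (y := (vecMulLinear B).toAddMonoidHom) (w := (vecMulLinear C).toAddMonoidHom)
    (by simpa [Matrix.single_one_vecMul, Matrix.row_apply'] using hZ) z
  simpa using hx.conj_pauliW_add hU' hz

end Pauli

lemma Matrix.mul_add_mul_row_eq_vecMul {m n o α : Type*} [Fintype n] [NonUnitalNonAssocSemiring α]
    (M Q : Matrix m n α) (P R : Matrix n o α) (i : m) :
    (M * P + Q * R) i = M i ᵥ* P + Q i ᵥ* R :=
  rfl

theorem clifford_concatenation_general (N : ℕ)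
    (U₁ U₂ : Matrix (Fin N → ZMod 2) (Fin N → ZMod 2) ℂ)
    (hU₁ : U₁ᴴ * U₁ = 1)
    (g1 a1 g2 a2 : Fin N → ℕ)
    (D1 F1 B1 C1 D2 F2 B2 C2 : Matrix (Fin N) (Fin N) (ZMod 2))
    (h1X : ∀ n : Fin N, U₁ᴴ * pauliW N (Pi.single n 1) 0 * U₁
        = Complex.I ^ (g1 n) • pauliW N (D1 n) (F1 n))
    (h1Z : ∀ n : Fin N, U₁ᴴ * pauliW N 0 (Pi.single n 1) * U₁
        = Complex.I ^ (a1 n) • pauliW N (B1 n) (C1 n))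
    (h2X : ∀ n : Fin N, U₂ᴴ * pauliW N (Pi.single n 1) 0 * U₂
        = Complex.I ^ (g2 n) • pauliW N (D2 n) (F2 n))
    (h2Z : ∀ n : Fin N, U₂ᴴ * pauliW N 0 (Pi.single n 1) * U₂
        = Complex.I ^ (a2 n) • pauliW N (B2 n) (C2 n)) :
    ∀ n : Fin N, ∃ s s' : ℕ,
      (U₂ * U₁)ᴴ * pauliW N (Pi.single n 1) 0 * (U₂ * U₁)
          = Complex.I ^ s • pauliW N ((D2 * D1 + F2 * B1) n) ((D2 * F1 + F2 * C1) n) ∧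
        (U₂ * U₁)ᴴ * pauliW N 0 (Pi.single n 1) * (U₂ * U₁)
          = Complex.I ^ s' • pauliW N ((B2 * D1 + C2 * B1) n) ((B2 * F1 + C2 * C1) n) := by
  intro n
  have conj₁ := conj_pauliW_phaseEq_tableau hU₁ (fun n => ⟨g1 n, h1X n⟩) (fun n => ⟨a1 n, h1Z n⟩)
  obtain ⟨s, hX⟩ := PhaseEq.conj_mul ⟨g2 n, h2X n⟩ (conj₁ (D2 n) (F2 n))
  obtain ⟨s', hZ⟩ := PhaseEq.conj_mul ⟨a2 n, h2Z n⟩ (conj₁ (B2 n) (C2 n))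
  simp only [Matrix.mul_add_mul_row_eq_vecMul]
  exact ⟨s, s', hX, hZ⟩

/-- Concatenation of Clifford circuits: if `U₁`, `U₂` are unitary with stabilizer tableaux
`(g⁽ⁱ⁾, a⁽ⁱ⁾, D⁽ⁱ⁾, F⁽ⁱ⁾, B⁽ⁱ⁾, C⁽ⁱ⁾)`, then the tableau of `U₂U₁` has binary part
`D = D⁽²⁾D⁽¹⁾ + F⁽²⁾B⁽¹⁾`, `F = D⁽²⁾F⁽¹⁾ + F⁽²⁾C⁽¹⁾`, `B = B⁽²⁾D⁽¹⁾ + C⁽²⁾B⁽¹⁾`,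
`C = B⁽²⁾F⁽¹⁾ + C⁽²⁾C⁽¹⁾` over `ZMod 2`, up to a power-of-`i` phase. -/
theorem clifford_concatenation (N : ℕ)
    (U₁ U₂ : Matrix (Fin N → ZMod 2) (Fin N → ZMod 2) ℂ)
    (hU₁ : U₁ᴴ * U₁ = 1) (hU₂ : U₂ᴴ * U₂ = 1)
    (g1 a1 g2 a2 : Fin N → ℕ)
    (D1 F1 B1 C1 D2 F2 B2 C2 : Matrix (Fin N) (Fin N) (ZMod 2))
    (h1X : ∀ n : Fin N, U₁ᴴ * pauliW N (Pi.single n 1) 0 * U₁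
        = Complex.I ^ (g1 n) • pauliW N (D1 n) (F1 n))
    (h1Z : ∀ n : Fin N, U₁ᴴ * pauliW N 0 (Pi.single n 1) * U₁
        = Complex.I ^ (a1 n) • pauliW N (B1 n) (C1 n))
    (h2X : ∀ n : Fin N, U₂ᴴ * pauliW N (Pi.single n 1) 0 * U₂
        = Complex.I ^ (g2 n) • pauliW N (D2 n) (F2 n))
    (h2Z : ∀ n : Fin N, U₂ᴴ * pauliW N 0 (Pi.single n 1) * U₂
        = Complex.I ^ (a2 n) • pauliW N (B2 n) (C2 n)) :
    ∀ n : Fin N, ∃ s s' : ℕ,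
      (U₂ * U₁)ᴴ * pauliW N (Pi.single n 1) 0 * (U₂ * U₁)
          = Complex.I ^ s • pauliW N ((D2 * D1 + F2 * B1) n) ((D2 * F1 + F2 * C1) n) ∧
        (U₂ * U₁)ᴴ * pauliW N 0 (Pi.single n 1) * (U₂ * U₁)
          = Complex.I ^ s' • pauliW N ((B2 * D1 + C2 * B1) n) ((B2 * F1 + C2 * C1) n) :=
  clifford_concatenation_general N U₁ U₂ hU₁ g1 a1 g2 a2 D1 F1 B1 C1 D2 F2 B2 C2 h1X h1Z h2X h2Z
end
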